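/- arXiv:2309.17247 — 3 statements merged into one kernel-verified Lean document; each statement's English description precedes it below -/
import Mathlib

section
/- There exists a measure η on the product σ-algebra 𝒜⊗ℬ on [0,1]×ℝ which is a product measure of the counting measure μ and Lebesgue measure ν (i.e. η(A×B) = μ(A)·ν(B) for every A ∈ 𝒜 and B ∈ ℬ), together with a measurable set S ∈ 𝒜⊗ℬ and a real number c, such that η(S + c) ≠ η(S). In particular, a product measure of two translation-invariant measures need not be invariant under vertical translations. -/
open MeasureTheory Set

noncomputable section

/-- `X = [0,1]` as a subtype of `ℝ`, carrying the Borel σ-algebra. -/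
abbrev X : Type := Set.Icc (0 : ℝ) 1

/-- The vertical shift of a set `S ⊆ X × ℝ` by `c : ℝ`:
`S + c = {(x, y + c) : (x, y) ∈ S}`. -/
def vshift (S : Set (X × ℝ)) (c : ℝ) : Set (X × ℝ) :=
  (fun p : X × ℝ => (p.1, p.2 + c)) '' S

/-- There is a product measure `η` of the counting measure on `[0,1]` and Lebesgue
measure on `ℝ`, a measurable set `S` and a real `c` such that `η (S + c) ≠ η S`. -/
theorem exists_product_measure_not_shift_invariant :
    ∃ (η : Measure (X × ℝ)) (S : Set (X × ℝ)) (c : ℝ),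
      MeasurableSet S ∧
      (∀ (A : Set X) (B : Set ℝ), MeasurableSet A → MeasurableSet B →
        η (A ×ˢ B) = Measure.count A * volume B) ∧
      η (vshift S c) ≠ η S := by
  -- the measurable embedding `X ↪ ℝ`
  have hemb : MeasurableEmbedding (Subtype.val : X → ℝ) :=
    MeasurableEmbedding.subtype_coe measurableSet_Icc
  -- Lebesgue measure transported to `X`
  set ρ : Measure X := Measure.comap Subtype.val volume with hρ
  have hρ_apply : ∀ s : Set X, ρ s = volume (Subtype.val '' s) := fun s =>
    hemb.comap_apply volume s
  -- the diagonal embedding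
  set f : X → X × ℝ := fun x => (x, (x : ℝ)) with hf
  have hfm : Measurable f := measurable_id.prodMk measurable_subtype_coe
  set η : Measure (X × ℝ) := Measure.count.prod volume + Measure.map f ρ with hη
  have hη_apply : ∀ T : Set (X × ℝ),
      η T = (Measure.count.prod volume) T + (Measure.map f ρ) T := fun T =>
    Measure.add_apply _ _ T
  refine ⟨η,
    {p : X × ℝ | (p.1 : ℝ) = p.2}, 2, ?_, ?_, ?_⟩
  · exact measurableSet_eq_fun (measurable_subtype_coe.comp measurable_fst) measurable_snd
  · intro A B hA hB
    rw [hη_apply]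
    have hprod : (Measure.count.prod volume) (A ×ˢ B) = Measure.count A * volume B :=
      Measure.prod_prod A B
    have hmap : (Measure.map f ρ) (A ×ˢ B) = ρ (A ∩ Subtype.val ⁻¹' B) := by
      rw [Measure.map_apply hfm (hA.prod hB)]
      congr 1
    rw [hprod, hmap]
    by_cases hB0 : volume B = 0
    · have h1 : ρ (A ∩ Subtype.val ⁻¹' B) = 0 := by
        refine le_antisymm ?_ bot_le
        calc ρ (A ∩ Subtype.val ⁻¹' B) ≤ ρ (Subtype.val ⁻¹' B) :=
              measure_mono inter_subset_right
          _ = volume (Subtype.val '' (Subtype.val ⁻¹' B)) := hρ_apply _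
          _ ≤ volume B := measure_mono (image_preimage_subset _ _)
          _ = 0 := hB0
      simp [h1]
    · by_cases hAf : A.Finite
      · have h1 : ρ (A ∩ Subtype.val ⁻¹' B) = 0 := by
          refine le_antisymm ?_ bot_le
          calc ρ (A ∩ Subtype.val ⁻¹' B) ≤ ρ A := measure_mono inter_subset_left
            _ = volume (Subtype.val '' A) := hρ_apply _
            _ = 0 := (hAf.image _).measure_zero _
        rw [h1, add_zero]
      · have h1 : Measure.count A = ⊤ := Measure.count_apply_infinite hAf
        rw [h1, ENNReal.top_mul hB0, top_add]
  · -- value on the shifted diagonal is 0, on the diagonal is 1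
    have hS' : vshift {p : X × ℝ | (p.1 : ℝ) = p.2} 2
        = {p : X × ℝ | (p.1 : ℝ) = p.2 - 2} := by
      ext ⟨a, b⟩
      constructor
      · rintro ⟨⟨x, y⟩, hxy, h⟩
        simp only [Prod.mk.injEq] at h
        obtain ⟨h1, h2⟩ := h
        simp only [mem_setOf_eq] at hxy ⊢
        subst h1
        rw [← h2, hxy]
        ring
      · intro h
        simp only [mem_setOf_eq] at h
        exact ⟨(a, b - 2), h, by simp⟩
    have hS'm : MeasurableSet {p : X × ℝ | (p.1 : ℝ) = p.2 - 2} :=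
      measurableSet_eq_fun (measurable_subtype_coe.comp measurable_fst)
        (measurable_snd.sub measurable_const)
    have hSm : MeasurableSet {p : X × ℝ | (p.1 : ℝ) = p.2} :=
      measurableSet_eq_fun (measurable_subtype_coe.comp measurable_fst) measurable_snd
    -- the shifted set has measure 0
    have hval_shift : η (vshift {p : X × ℝ | (p.1 : ℝ) = p.2} 2) = 0 := by
      rw [hS', hη_apply]
      have h1 : (Measure.count.prod volume) {p : X × ℝ | (p.1 : ℝ) = p.2 - 2} = 0 := by
        rw [Measure.prod_apply hS'm]
        have : ∀ x : X, volume (Prod.mk x ⁻¹' {p : X × ℝ | (p.1 : ℝ) = p.2 - 2}) = 0 := by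
          intro x
          have : Prod.mk x ⁻¹' {p : X × ℝ | (p.1 : ℝ) = p.2 - 2} = {(x : ℝ) + 2} := by
            ext y; simp only [mem_preimage, mem_setOf_eq, mem_singleton_iff]
            constructor <;> intro h <;> linarith
          rw [this]; exact Real.volume_singleton
        simp only [this, lintegral_zero]
      have h2 : (Measure.map f ρ) {p : X × ℝ | (p.1 : ℝ) = p.2 - 2} = 0 := by
        rw [Measure.map_apply hfm hS'm]
        have : f ⁻¹' {p : X × ℝ | (p.1 : ℝ) = p.2 - 2} = ∅ := by
          ext x
          simp only [mem_preimage, mem_setOf_eq, mem_empty_iff_false, iff_false, hf]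
          intro h; linarith
        rw [this, measure_empty]
      rw [h1, h2, add_zero]
    -- the diagonal has measure 1
    have hval : η {p : X × ℝ | (p.1 : ℝ) = p.2} = 1 := by
      rw [hη_apply]
      have h1 : (Measure.count.prod volume) {p : X × ℝ | (p.1 : ℝ) = p.2} = 0 := by
        rw [Measure.prod_apply hSm]
        have : ∀ x : X, volume (Prod.mk x ⁻¹' {p : X × ℝ | (p.1 : ℝ) = p.2}) = 0 := by
          intro x
          have : Prod.mk x ⁻¹' {p : X × ℝ | (p.1 : ℝ) = p.2} = {(x : ℝ)} := by
            ext y; simp [eq_comm]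
          rw [this]; exact Real.volume_singleton
        simp only [this, lintegral_zero]
      have h2 : (Measure.map f ρ) {p : X × ℝ | (p.1 : ℝ) = p.2} = 1 := by
        rw [Measure.map_apply hfm hSm]
        have hpre : f ⁻¹' {p : X × ℝ | (p.1 : ℝ) = p.2} = univ := by
          ext x; simp [hf]
        rw [hpre, hρ_apply, image_univ, Subtype.range_coe, Real.volume_Icc]
        norm_num
      rw [h1, h2, zero_add]
    rw [hval_shift, hval]
    exact zero_ne_one
end
end

section
/- Let ρ be a product measure of the counting measure μ on [0,1] and Lebesgue measure ν on ℝ that assigns the diagonal measure zero (for instance Mathlib's Measure.prod of μ and ν), and let ξ(E) = ν(f⁻¹(E ∩ Δ)). Then η := ρ + ξ is a product measure: for all Borel A ⊆ [0,1] and Borel B ⊆ ℝ, η(A×B) = μ(A)·ν(B). -/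
open MeasureTheory Set

noncomputable section

/-- The diagonal `Δ = {(x, x) : x ∈ [0,1]} ⊆ X × ℝ`. -/
def diag : Set (X × ℝ) := {p : X × ℝ | (p.1 : ℝ) = p.2}

/-- The diagonal map `f : [0,1] → [0,1] × ℝ`, `f(x) = (x, x)`. -/
def f : X → X × ℝ := fun x => (x, (x : ℝ))

/-- The set function `ξ(E) = ν(f⁻¹(E ∩ Δ))`, with the preimage viewed as a
subset of `ℝ` and `ν` the Lebesgue measure. -/
def xi (E : Set (X × ℝ)) : ENNReal :=
  volume ((fun x : X => (x : ℝ)) '' (f ⁻¹' (E ∩ diag)))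

/-
The diagonal sees only the part of `A × B` lying over `A ∩ B`, so `ξ(A × B) = ν(A ∩ B)`.
If `μ(A) ν(B) < ∞` then either `ν(B) = 0` or `A` is finite, hence Lebesgue-null; in both
cases `ξ(A × B) = 0`. If `μ(A) ν(B) = ∞`, both sides of the identity are `∞`.
-/

theorem measure_image_inter_eq_zero_of_count_mul_ne_top {α β : Type*} [MeasurableSpace α]
    [MeasurableSpace β] {μ : Measure β} [NullSingletonClass μ] (g : α → β) {A : Set α} {B : Set β}
    (h : Measure.count A * μ B ≠ ⊤) : μ (g '' A ∩ B) = 0 := by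
  rcases eq_or_ne (μ B) 0 with hB | hB
  · exact measure_mono_null inter_subset_right hB
  · have hA : A.Finite := not_infinite.mp fun hA =>
      h (by rw [Measure.count_apply_infinite hA, ENNReal.top_mul hB])
    exact measure_mono_null inter_subset_left ((hA.image g).measure_zero μ)

theorem xi_prod (A : Set X) (B : Set ℝ) : xi (A ×ˢ B) = volume (Subtype.val '' A ∩ B) := by
  have : f ⁻¹' (A ×ˢ B ∩ diag) = A ∩ Subtype.val ⁻¹' B := by
    ext x
    simp [f, diag]
  rw [xi, this, image_inter_preimage]

theorem add_xi_is_product_measure_general (ρ : Measure (X × ℝ))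
    (hρ : ∀ (A : Set X) (B : Set ℝ), MeasurableSet A → MeasurableSet B →
      ρ (A ×ˢ B) = Measure.count A * volume B) :
    ∀ (A : Set X) (B : Set ℝ), MeasurableSet A → MeasurableSet B →
      ρ (A ×ˢ B) + xi (A ×ˢ B) = Measure.count A * volume B := by
  intro A B hA hB
  rw [hρ A B hA hB, xi_prod]
  by_cases h : Measure.count A * volume B = ⊤
  · rw [h, top_add]
  · rw [measure_image_inter_eq_zero_of_count_mul_ne_top Subtype.val h, add_zero]

/-- If `ρ` is a product measure of the counting measure on `[0,1]` and Lebesgue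
measure on `ℝ` with `ρ(Δ) = 0`, then `η := ρ + ξ` is again a product measure:
`η(A × B) = μ(A) · ν(B)` for all Borel `A ⊆ [0,1]` and Borel `B ⊆ ℝ`. -/
theorem add_xi_is_product_measure (ρ : Measure (X × ℝ))
    (hρ : ∀ (A : Set X) (B : Set ℝ), MeasurableSet A → MeasurableSet B →
      ρ (A ×ˢ B) = Measure.count A * volume B)
    (hρΔ : ρ diag = 0) :
    ∀ (A : Set X) (B : Set ℝ), MeasurableSet A → MeasurableSet B →
      ρ (A ×ˢ B) + xi (A ×ˢ B) = Measure.count A * volume B :=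
  add_xi_is_product_measure_general ρ hρ
end
end

section
/- With ρ a product measure of the counting measure and Lebesgue measure satisfying ρ(Δ) = 0 = ρ(Δ+1) (for instance Mathlib's Measure.prod), ξ(E) = ν(f⁻¹(E ∩ Δ)), and η := ρ + ξ, one has η(Δ) = 1 while the vertical shift satisfies η(Δ + 1) = 0; hence η(Δ + 1) ≠ η(Δ). -/
open MeasureTheory Set

noncomputable section

/-- With `ρ` a product measure of the counting measure and Lebesgue measure
satisfying `ρ(Δ) = 0 = ρ(Δ + 1)`, the measure `η := ρ + ξ` has `η(Δ) = 1` and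
`η(Δ + 1) = 0`; in particular `η(Δ + 1) ≠ η(Δ)`. -/
theorem eta_diag_ne_eta_shifted_diag (ρ : Measure (X × ℝ))
    (hρ : ∀ (A : Set X) (B : Set ℝ), MeasurableSet A → MeasurableSet B →
      ρ (A ×ˢ B) = Measure.count A * volume B)
    (hρΔ : ρ diag = 0) (hρΔ1 : ρ (vshift diag 1) = 0) :
    ρ diag + xi diag = 1 ∧
    ρ (vshift diag 1) + xi (vshift diag 1) = 0 ∧
    ρ (vshift diag 1) + xi (vshift diag 1) ≠ ρ diag + xi diag := by
  have h1 : xi diag = 1 := by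
    have hpre : f ⁻¹' (diag ∩ diag) = univ := by
      ext x; simp [f, diag]
    rw [xi, hpre, Subtype.coe_image_univ]
    simp [Real.volume_Icc]
  have h2 : xi (vshift diag 1) = 0 := by
    have hpre : f ⁻¹' (vshift diag 1 ∩ diag) = ∅ := by
      ext x
      simp only [mem_preimage, mem_inter_iff, mem_empty_iff_false, iff_false, not_and]
      intro hmem _
      simp only [vshift, f, diag, mem_image, mem_setOf_eq] at hmem
      obtain ⟨p, hp, heq⟩ := hmem
      have h1 : (p.1 : ℝ) = p.2 := hp
      have h2 : p.1 = x := congrArg Prod.fst heq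
      have h3 : p.2 + 1 = (x : ℝ) := congrArg Prod.snd heq
      rw [h2] at h1; linarith
    rw [xi, hpre]; simp
  refine ⟨by rw [hρΔ, h1]; simp, by rw [hρΔ1, h2]; simp, ?_⟩
  rw [hρΔ, hρΔ1, h1, h2]; simp
end
end
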